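/- Let λ ≠ 1, α a positive integer, c ≠ 0, and define Frobenius–Euler polynomials H_n^{(α)}(x|λ) by ((1-λ)/(e^t-λ))^α e^{xt} = ∑ H_n^{(α)}(x|λ)t^n/n!, and Bernoulli polynomials of order a by (t/(e^t-1))^a e^{xt} = ∑ B_n^{(a)}(x)t^n/n!. For n ≥ 1, the polynomial Sₙ(x) := ((1-λ)/(e^t-λ))^α · x · (t(1+t)^c/log(1+t))^n x^{n-1} satisfies Sₙ(x) = ∑_{l=0}^{n-1} C(n-1,l) B_l^{(l-n+1)}(cn+1) H_{n-l}^{(α)}(x|λ). -/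

import Mathlib

open PowerSeries Nat

noncomputable section

/-- The exponential series `e^t ∈ ℚ[[t]]`. -/
def expS : PowerSeries ℚ := PowerSeries.exp ℚ

/-- `log(1+t) = ∑_{k≥1} (-1)^{k+1} t^k / k`. -/
def logS : PowerSeries ℚ := PowerSeries.mk fun k => if k = 0 then 0 else (-1 : ℚ)^(k+1) / k

/-- `log(1+t)/t = ∑_{k≥0} (-1)^k t^k/(k+1)`. -/
def LtS : PowerSeries ℚ := PowerSeries.mk fun k => (-1 : ℚ)^k / (k+1)

/-- `(e^{bt} - 1)/t`. -/
def ebt (b : ℚ) : PowerSeries ℚ := PowerSeries.mk fun m => b^(m+1) / (m+1)!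

/-- Falling factorial `(x)_m = x(x-1)⋯(x-m+1)`. -/
def ff (x : ℚ) (m : ℕ) : ℚ := ∏ i ∈ Finset.range m, (x - i)

/-- `(1+t)^x = ∑_m (x)_m t^m/m!`. -/
def onePlusPow (x : ℚ) : PowerSeries ℚ := PowerSeries.mk fun m => ff x m / m !

/-- Integer powers of a power series (negative powers via `PowerSeries.inv`). -/
def zp (f : PowerSeries ℚ) : ℤ → PowerSeries ℚ
  | Int.ofNat n => f ^ n
  | Int.negSucc n => f⁻¹ ^ (n + 1)

/-- Stirling numbers of the second kind. -/
def S2 : ℕ → ℕ → ℕ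
  | 0, 0 => 1
  | 0, _ + 1 => 0
  | _ + 1, 0 => 0
  | n + 1, k + 1 => (k + 1) * S2 n (k + 1) + S2 n k

/-- Signed Stirling numbers of the first kind: `(x)_n = ∑_l S1 n l • x^l`. -/
def S1 : ℕ → ℕ → ℤ
  | 0, 0 => 1
  | 0, _ + 1 => 0
  | _ + 1, 0 => 0
  | n + 1, k + 1 => S1 n k - n * S1 n (k + 1)

/-- Bernoulli polynomial of (integer) order `a` evaluated at `x`:
`(t/(e^t-1))^a e^{xt} = ∑_m Bpol a x m • t^m/m!`. -/
def Bpol (a : ℤ) (x : ℚ) (m : ℕ) : ℚ :=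
  m ! * PowerSeries.coeff m (zp (ebt 1)⁻¹ a * PowerSeries.rescale x expS)

/-- Bernoulli numbers of order `a`. -/
def Bnum (a : ℤ) (m : ℕ) : ℚ := Bpol a 0 m

/-- Narumi numbers: `(log(1+t)/t)^n = ∑_l Nnum n l • t^l/l!`. -/
def Nnum (n l : ℕ) : ℚ := l ! * PowerSeries.coeff l (LtS ^ n)

/-- Narumi polynomials of (integer) order `a`:
`(log(1+t)/t)^a (1+t)^x = ∑_l Npol a x l • t^l/l!`. -/
def Npol (a : ℤ) (x : ℚ) (l : ℕ) : ℚ :=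
  l ! * PowerSeries.coeff l (zp LtS a * onePlusPow x)

/-- Bernoulli polynomials of the second kind:
`t(1+t)^x/log(1+t) = ∑_m b2 x m • t^m/m!`. -/
def b2 (x : ℚ) (m : ℕ) : ℚ := m ! * PowerSeries.coeff m (onePlusPow x * LtS⁻¹)

/-- Poisson–Charlier polynomial `C_n(x;a)`. -/
def PC (n : ℕ) (x a : ℚ) : ℚ :=
  ∑ k ∈ Finset.range (n + 1), (n.choose k : ℚ) * (-1)^(n - k) * (a⁻¹)^k * ff x k

/-- Generalized binomial coefficient `C(x, m) = (x)_m/m!`. -/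
def gchoose (x : ℚ) (m : ℕ) : ℚ := ff x m / m !

/-- Action of a power series `f(t) = ∑ a_k t^k/k!` on a polynomial:
`f(t) p(x) = ∑_k a_k p^{(k)}(x)/k!` (a finite sum). -/
def act (f : PowerSeries ℚ) (p : Polynomial ℚ) : Polynomial ℚ :=
  ∑ k ∈ Finset.range (p.natDegree + 1),
    PowerSeries.coeff k f • (⇑Polynomial.derivative)^[k] p

/-- `e^{xt} ∈ (ℚ[x])[[t]]`. -/
def expPoly : PowerSeries (Polynomial ℚ) :=
  PowerSeries.mk fun k => ((k ! : ℚ)⁻¹) • Polynomial.X ^ k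

/-- The Sheffer polynomial sequence attached to an invertible series `f`:
`f(t) e^{xt} = ∑_n (polyOf f n) t^n/n!`. -/
def polyOf (f : PowerSeries ℚ) (n : ℕ) : Polynomial ℚ :=
  (n ! : ℚ) • PowerSeries.coeff n (PowerSeries.map Polynomial.C f * expPoly)

/-- `((1-λ)/(e^t-λ))^α`. -/
def FEser (lam : ℚ) (α : ℕ) : PowerSeries ℚ :=
  (PowerSeries.C (1 - lam) * (expS - PowerSeries.C lam)⁻¹) ^ α

/-- Frobenius–Euler polynomials of order `α`. -/
def FE (lam : ℚ) (α n : ℕ) : Polynomial ℚ := polyOf (FEser lam α) n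

/-- `(2/(e^t+1))^α`. -/
def Eser (α : ℕ) : PowerSeries ℚ := (PowerSeries.C (2 : ℚ) * (expS + 1)⁻¹) ^ α

/-- Euler polynomials of order `α`. -/
def Epol (α n : ℕ) : Polynomial ℚ := polyOf (Eser α) n

/-- `((1-λ)/(e^{(λ-1)t}-λ))^α`. -/
def Aser (lam : ℚ) (α : ℕ) : PowerSeries ℚ :=
  (PowerSeries.C (1 - lam) *
    (PowerSeries.rescale (lam - 1) expS - PowerSeries.C lam)⁻¹) ^ α

/-- Frobenius-type Eulerian polynomials of order `α`. -/
def Apol (lam : ℚ) (α n : ℕ) : Polynomial ℚ := polyOf (Aser lam α) n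

end

/-!
Write `G = ((1+t)^c t/log(1+t))^n`. The inner operator sends `x^{n-1}` to
`∑ₗ C(n-1,l) l! [tˡ]G x^{n-1-l}` and the outer one sends `x^{n-l}` to `H_{n-l}^{(α)}(x|λ)`, so
everything reduces to the coefficient identity
`[tˡ] (1+t)^y (t/log(1+t))^{l+k+1} = [tˡ] e^{(y+1)t} ((e^t-1)/t)^k` at `y = cn`, `k = n-1-l`,
which is the substitution `t = e^u - 1` in a residue. Formally, both sides satisfy the same
recurrence in `(l, k)`; it comes from the differential equations `(1+t)(v - t v') = v²` for
`v = t/log(1+t)` and `(tE)' = e^t` for `E = (e^t-1)/t`.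
-/

namespace PowerSeries

variable {R k : Type*} [CommSemiring R] [Field k]

theorem coeff_X_mul_derivative (f : R⟦X⟧) (n : ℕ) :
    coeff n (X * d⁄dX R f) = n * coeff n f := by
  rcases n with _ | n
  · simp
  · rw [coeff_succ_X_mul, coeff_derivative, mul_comm]; push_cast; rfl

theorem derivative_rescale (a : R) (f : R⟦X⟧) :
    d⁄dX R (rescale a f) = C a * rescale a (d⁄dX R f) := by
  ext n
  simp only [coeff_derivative, coeff_rescale, coeff_C_mul, pow_succ]
  ring

theorem inv_inv_of_constantCoeff_ne_zero {f : k⟦X⟧}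
    (h : constantCoeff f ≠ 0) : f⁻¹⁻¹ = f := by
  rw [inv_eq_iff_mul_eq_one (by simpa using h)]
  exact f.mul_inv_cancel h

end PowerSeries

theorem ff_succ (x : ℚ) (m : ℕ) : ff x (m + 1) = x * ff (x - 1) m := by
  rw [ff, ff, Finset.prod_range_succ', mul_comm]
  simp only [Nat.cast_add, Nat.cast_one, Nat.cast_zero, sub_zero, sub_add_eq_sub_sub,
    sub_right_comm]

theorem onePlusPow_eq_binomialSeries (x : ℚ) :
    onePlusPow x = PowerSeries.binomialSeries ℚ x := by
  ext m
  rw [onePlusPow, coeff_mk, binomialSeries_coeff, smul_eq_mul, mul_one, Ring.choose_eq_smul,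
    smul_eq_mul, ← Polynomial.aeval_eq_smeval, Polynomial.aeval_def, Polynomial.eval₂_eq_eval_map,
    descPochhammer_map, descPochhammer_eval_eq_prod_range, ff, div_eq_inv_mul]

theorem onePlusPow_add (x y : ℚ) : onePlusPow (x + y) = onePlusPow x * onePlusPow y := by
  simp only [onePlusPow_eq_binomialSeries, binomialSeries_add]

theorem onePlusPow_add_one (x : ℚ) : onePlusPow (x + 1) = (1 + X) * onePlusPow x := by
  rw [onePlusPow_add, mul_comm, onePlusPow_eq_binomialSeries 1, ← Nat.cast_one,
    binomialSeries_nat, pow_one]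

theorem onePlusPow_pow (x : ℚ) (n : ℕ) : onePlusPow x ^ n = onePlusPow (x * n) := by
  induction n with
  | zero => simp [onePlusPow_eq_binomialSeries]
  | succ n ih => rw [pow_succ, ih, ← onePlusPow_add]; push_cast; ring_nf

theorem constantCoeff_onePlusPow (x : ℚ) : constantCoeff (onePlusPow x) = 1 := by
  simp [onePlusPow_eq_binomialSeries]

theorem derivative_onePlusPow (x : ℚ) :
    d⁄dX ℚ (onePlusPow x) = C x * onePlusPow (x - 1) := by
  ext m
  simp only [coeff_derivative, coeff_C_mul, onePlusPow, coeff_mk]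
  rw [ff_succ, Nat.factorial_succ]
  push_cast
  field_simp

theorem constantCoeff_LtS : constantCoeff LtS = 1 := by
  simp [LtS, ← coeff_zero_eq_constantCoeff_apply]

theorem constantCoeff_ebt_one : constantCoeff (ebt 1) = 1 := by
  simp [ebt, ← coeff_zero_eq_constantCoeff_apply]

theorem one_add_X_mul_derivative_X_mul_LtS : (1 + X) * d⁄dX ℚ (X * LtS) = 1 := by
  have hD : ∀ m, coeff m (d⁄dX ℚ (X * LtS)) = (-1) ^ m := fun m => by
    rw [coeff_derivative, coeff_succ_X_mul, LtS, coeff_mk]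
    field_simp
  ext (_ | m)
  · simp [add_mul, constantCoeff_LtS]
  · rw [add_mul, one_mul, map_add, coeff_succ_X_mul, hD, hD, coeff_one, pow_succ]
    simp

theorem one_add_X_mul_sub_X_mul_derivative_inv_LtS :
    (1 + X) * (LtS⁻¹ - X * d⁄dX ℚ LtS⁻¹) = LtS⁻¹ ^ 2 := by
  have hinv : LtS * LtS⁻¹ = 1 := LtS.mul_inv_cancel (by simp [constantCoeff_LtS])
  have hlog := one_add_X_mul_derivative_X_mul_LtS
  rw [Derivation.leibniz, derivative_X, smul_eq_mul, smul_eq_mul, mul_one] at hlog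
  rw [derivative_inv']
  linear_combination LtS⁻¹ ^ 2 * hlog - (1 + X) * LtS⁻¹ * hinv

theorem expS_eq_one_add_X_mul_ebt_one : expS = 1 + X * ebt 1 := by
  ext (_ | m)
  · simp [expS, ebt]
  · simp [expS, ebt, coeff_succ_X_mul]

theorem ebt_one_add_X_mul_derivative_ebt_one : ebt 1 + X * d⁄dX ℚ (ebt 1) = expS := by
  have h := congrArg (d⁄dX ℚ) expS_eq_one_add_X_mul_ebt_one
  rw [expS, derivative_exp, ← expS, map_add, derivative_one, zero_add, Derivation.leibniz,
    derivative_X, smul_eq_mul, smul_eq_mul, mul_one] at h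
  rw [h]; ring

theorem rescale_expS_mul_expS (a : ℚ) : rescale a expS * expS = rescale (a + 1) expS := by
  rw [expS, ← exp_mul_exp_eq_exp_add, rescale_one]; rfl

theorem derivative_rescale_expS (a : ℚ) :
    d⁄dX ℚ (rescale a expS) = C a * rescale a expS := by
  rw [derivative_rescale, expS, derivative_exp]

theorem onePlusPow_mul_inv_LtS_pow_ode (N : ℕ) (y : ℚ) :
    C (N : ℚ) * (onePlusPow y * LtS⁻¹ ^ (N + 1)) +
        X * d⁄dX ℚ (onePlusPow (y + 1) * LtS⁻¹ ^ N) =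
      C (y + 1) * X * (onePlusPow y * LtS⁻¹ ^ N) +
        C (N : ℚ) * (onePlusPow (y + 1) * LtS⁻¹ ^ N) := by
  rw [Derivation.leibniz, derivative_pow, derivative_onePlusPow, add_sub_cancel_right,
    onePlusPow_add_one, smul_eq_mul, smul_eq_mul, map_natCast]
  rcases N with _ | N
  · simp only [Nat.cast_zero, pow_zero, zero_mul, mul_one]; ring
  · rw [add_tsub_cancel_right]
    push_cast
    linear_combination (-(N + 1 : ℚ⟦X⟧) * onePlusPow y * LtS⁻¹ ^ N) *
      one_add_X_mul_sub_X_mul_derivative_inv_LtS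

theorem rescale_expS_mul_ebt_one_pow_ode (k : ℕ) (a : ℚ) :
    C (k : ℚ) * (rescale a expS * ebt 1 ^ k) + X * d⁄dX ℚ (rescale a expS * ebt 1 ^ k) =
      C a * X * (rescale a expS * ebt 1 ^ k) +
        C (k : ℚ) * (rescale (a + 1) expS * ebt 1 ^ (k - 1)) := by
  rw [Derivation.leibniz, derivative_pow, derivative_rescale_expS, ← rescale_expS_mul_expS,
    smul_eq_mul, smul_eq_mul, map_natCast]
  rcases k with _ | k
  · simp only [Nat.cast_zero, pow_zero, zero_mul, mul_zero]; ring
  · rw [add_tsub_cancel_right, ← ebt_one_add_X_mul_derivative_ebt_one]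
    ring

theorem coeff_succ_onePlusPow_mul_inv_LtS_pow (N l : ℕ) (y : ℚ) :
    N * coeff (l + 1) (onePlusPow y * LtS⁻¹ ^ (N + 1)) =
      (y + 1) * coeff l (onePlusPow y * LtS⁻¹ ^ N) +
        (N - (l + 1)) * coeff (l + 1) (onePlusPow (y + 1) * LtS⁻¹ ^ N) := by
  have h := congrArg (coeff (l + 1)) (onePlusPow_mul_inv_LtS_pow_ode N y)
  rw [map_add, map_add, coeff_X_mul_derivative, mul_assoc, coeff_C_mul, coeff_C_mul,
    coeff_succ_X_mul, coeff_C_mul] at h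
  push_cast at h
  linear_combination h

theorem coeff_succ_rescale_expS_mul_ebt_one_pow (k l : ℕ) (a : ℚ) :
    (k + (l + 1)) * coeff (l + 1) (rescale a expS * ebt 1 ^ k) =
      a * coeff l (rescale a expS * ebt 1 ^ k) +
        k * coeff (l + 1) (rescale (a + 1) expS * ebt 1 ^ (k - 1)) := by
  have h := congrArg (coeff (l + 1)) (rescale_expS_mul_ebt_one_pow_ode k a)
  rw [map_add, map_add, coeff_X_mul_derivative, mul_assoc, coeff_C_mul, coeff_C_mul,
    coeff_succ_X_mul, coeff_C_mul] at h
  push_cast at h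
  linear_combination h

theorem coeff_onePlusPow_mul_inv_LtS_pow (l k : ℕ) (y : ℚ) :
    coeff l (onePlusPow y * LtS⁻¹ ^ (l + k + 1)) =
      coeff l (rescale (y + 1) expS * ebt 1 ^ k) := by
  induction l generalizing k y with
  | zero =>
    simp [coeff_mul, constantCoeff_onePlusPow, constantCoeff_LtS, constantCoeff_ebt_one, expS]
  | succ l ihl =>
    induction k generalizing y with
    | zero =>
      have hF := coeff_succ_onePlusPow_mul_inv_LtS_pow (l + 0 + 1) l y
      have hG := coeff_succ_rescale_expS_mul_ebt_one_pow 0 l (y + 1)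
      rw [ihl 0 y] at hF
      push_cast at hF hG
      refine mul_left_cancel₀ (by positivity : (l + 1 : ℚ) ≠ 0) ?_
      linear_combination hF - hG
    | succ k ihk =>
      have hF := coeff_succ_onePlusPow_mul_inv_LtS_pow (l + (k + 1) + 1) l y
      have hG := coeff_succ_rescale_expS_mul_ebt_one_pow (k + 1) l (y + 1)
      rw [ihl, show l + (k + 1) + 1 = l + 1 + k + 1 by omega, ihk] at hF
      rw [show l + 1 + (k + 1) + 1 = l + 1 + k + 1 + 1 by omega]
      push_cast at hF hG
      refine mul_left_cancel₀ (by positivity : (l + k + 2 : ℚ) ≠ 0) ?_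
      linear_combination hF - hG

theorem zp_neg_natCast (f : PowerSeries ℚ) (k : ℕ) : zp f (-k) = f⁻¹ ^ k := by
  rcases k with _ | k
  · rfl
  · rw [Nat.cast_succ, ← Int.negSucc_eq]; rfl

theorem Bpol_eq_factorial_mul_coeff (c : ℚ) {n l : ℕ} (hl : l < n) :
    Bpol ((l : ℤ) - n + 1) (c * n + 1) l = l ! * coeff l ((onePlusPow c * LtS⁻¹) ^ n) := by
  obtain ⟨k, rfl⟩ : ∃ k, n = l + k + 1 := ⟨n - l - 1, by omega⟩
  have hexp : (l : ℤ) - (l + k + 1 : ℕ) + 1 = -k := by push_cast; ring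
  rw [Bpol, hexp, zp_neg_natCast,
    inv_inv_of_constantCoeff_ne_zero (by simp [constantCoeff_ebt_one]), mul_pow, onePlusPow_pow,
    coeff_onePlusPow_mul_inv_LtS_pow, mul_comm (ebt 1 ^ k)]

theorem act_eq_sum_range (f : PowerSeries ℚ) {p : Polynomial ℚ} {N : ℕ} (hN : p.natDegree ≤ N) :
    act f p = ∑ k ∈ Finset.range (N + 1), coeff k f • Polynomial.derivative^[k] p := by
  refine Finset.sum_subset (Finset.range_subset_range.mpr (by omega)) fun k hk hk' => ?_
  rw [Finset.mem_range] at hk hk'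
  rw [Polynomial.iterate_derivative_eq_zero (by omega), smul_zero]

theorem act_add (f : PowerSeries ℚ) (p q : Polynomial ℚ) :
    act f (p + q) = act f p + act f q := by
  have hp : p.natDegree ≤ p.natDegree + q.natDegree := by omega
  have hq : q.natDegree ≤ p.natDegree + q.natDegree := by omega
  have hpq := (Polynomial.natDegree_add_le p q).trans (max_le hp hq)
  simp only [act_eq_sum_range f hp, act_eq_sum_range f hq, act_eq_sum_range f hpq,
    iterate_map_add, smul_add, Finset.sum_add_distrib]

theorem act_smul (f : PowerSeries ℚ) (a : ℚ) (p : Polynomial ℚ) :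
    act f (a • p) = a • act f p := by
  rw [act_eq_sum_range f (Polynomial.natDegree_smul_le a p), act, Finset.smul_sum]
  simp only [Polynomial.iterate_derivative_smul, smul_comm a]

theorem act_sum_smul {ι : Type*} (f : PowerSeries ℚ) (s : Finset ι) (a : ι → ℚ)
    (p : ι → Polynomial ℚ) : act f (∑ i ∈ s, a i • p i) = ∑ i ∈ s, a i • act f (p i) := by
  refine (map_sum (AddMonoidHom.mk' (act f) (act_add f)) _ _).trans ?_
  simp only [AddMonoidHom.mk'_apply, act_smul]

theorem act_X_pow (f : PowerSeries ℚ) (m : ℕ) :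
    act f (Polynomial.X ^ m) =
      ∑ k ∈ Finset.range (m + 1), (m.descFactorial k * coeff k f) • Polynomial.X ^ (m - k) := by
  rw [act, Polynomial.natDegree_X_pow]
  simp only [Polynomial.iterate_derivative_X_pow_eq_smul, smul_smul, mul_comm]

theorem act_X_pow_eq_polyOf (f : PowerSeries ℚ) (m : ℕ) :
    act f (Polynomial.X ^ m) = polyOf f m := by
  rw [act_X_pow, polyOf, coeff_mul, Finset.Nat.sum_antidiagonal_eq_sum_range_succ_mk,
    Finset.smul_sum]
  refine Finset.sum_congr rfl fun k hk => ?_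
  have hkm : k ≤ m := Nat.lt_succ_iff.mp (Finset.mem_range.mp hk)
  rw [coeff_map, expPoly, coeff_mk, Polynomial.smul_eq_C_mul, Polynomial.smul_eq_C_mul,
    Polynomial.smul_eq_C_mul, ← mul_assoc, ← mul_assoc, ← map_mul, ← map_mul,
    ← Nat.factorial_mul_descFactorial hkm]
  congr 2
  push_cast
  field_simp

theorem stmt14_general (lam : ℚ) (α : ℕ) (c : ℚ) (n : ℕ) (hn : 1 ≤ n) :
    act (FEser lam α)
        (Polynomial.X * act ((onePlusPow c * LtS⁻¹) ^ n) (Polynomial.X ^ (n - 1))) =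
      ∑ l ∈ Finset.range n,
        (((n - 1).choose l : ℚ) * Bpol ((l : ℤ) - n + 1) (c * n + 1) l) •
          FE lam α (n - l) := by
  obtain ⟨m, rfl⟩ : ∃ m, n = m + 1 := ⟨n - 1, by omega⟩
  set G := (onePlusPow c * LtS⁻¹) ^ (m + 1)
  have hXact : Polynomial.X * act G (Polynomial.X ^ m) =
      ∑ l ∈ Finset.range (m + 1), (m.descFactorial l * coeff l G) • Polynomial.X ^ (m + 1 - l) := by
    rw [act_X_pow, Finset.mul_sum]
    refine Finset.sum_congr rfl fun l hl => ?_
    rw [mul_smul_comm, ← pow_succ' (Polynomial.X : Polynomial ℚ),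
      Nat.sub_add_comm (Finset.mem_range_succ_iff.mp hl)]
  rw [add_tsub_cancel_right, hXact, act_sum_smul]
  refine Finset.sum_congr rfl fun l hl => ?_
  rw [act_X_pow_eq_polyOf, Bpol_eq_factorial_mul_coeff c (Finset.mem_range.mp hl),
    Nat.descFactorial_eq_factorial_mul_choose]
  congr 1
  push_cast
  ring

theorem stmt14 (lam : ℚ) (hlam : lam ≠ 1) (α : ℕ) (hα : 0 < α)
    (c : ℚ) (hc : c ≠ 0) (n : ℕ) (hn : 1 ≤ n) :
    act (FEser lam α)
        (Polynomial.X * act ((onePlusPow c * LtS⁻¹) ^ n) (Polynomial.X ^ (n - 1))) =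
      ∑ l ∈ Finset.range n,
        (((n - 1).choose l : ℚ) * Bpol ((l : ℤ) - n + 1) (c * n + 1) l) •
          FE lam α (n - l) :=
  stmt14_general lam α c n hn
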